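/- For positive semidefinite d×d matrices Σ1, Σ2, the inequality trace(Σ1) + trace(Σ2) ≥ 2·trace((Σ2^{1/2} Σ1 Σ2^{1/2})^{1/2}) holds. -/

import Mathlib

/-!
For positive definite `X`, the matrix `(R - X) X⁻¹ (R - X)` is positive semidefinite, so
`2 tr R ≤ tr (R X⁻¹ R) + tr X`. Take `R = (S₂^{1/2} S₁ S₂^{1/2})^{1/2}` and `X = S₂ + δ I`.
As `S₂^{1/2}` commutes with `X`, `tr (R X⁻¹ R) = tr (S₁ S₂^{1/2} X⁻¹ S₂^{1/2}) = tr S₁ - δ tr (S₁ X⁻¹)`,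
which is at most `tr S₁`, while `tr X = tr S₂ + δ d`. Letting `δ → 0` gives the inequality.
-/

open Matrix

section
open scoped ComplexOrder

/-- The positive semidefinite square root, as defined in the older Mathlib
(`Matrix.PosSemidef.sqrt`, since removed). -/
noncomputable def Matrix.PosSemidef.sqrt {n : Type*} [Fintype n] [DecidableEq n] {𝕜 : Type*}
    [RCLike 𝕜] {A : Matrix n n 𝕜} (hA : A.PosSemidef) : Matrix n n 𝕜 :=
  hA.1.eigenvectorUnitary.1 * diagonal ((↑) ∘ (√·) ∘ hA.1.eigenvalues) *
    (star hA.1.eigenvectorUnitary : Matrix n n 𝕜)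

end

namespace Matrix.PosSemidef

open scoped ComplexOrder

variable {n 𝕜 : Type*} [Fintype n] [DecidableEq n] [RCLike 𝕜] {A : Matrix n n 𝕜}

lemma sqrt_mul_self (hA : A.PosSemidef) : hA.sqrt * hA.sqrt = A := by
  set U := hA.1.eigenvectorUnitary
  set D : Matrix n n 𝕜 := diagonal ((↑) ∘ (√·) ∘ hA.1.eigenvalues)
  have hU : (star U : Matrix n n 𝕜) * U = 1 := by simp
  conv_rhs => rw [hA.1.spectral_theorem, Unitary.conjStarAlgAut_apply]
  calc hA.sqrt * hA.sqrt
        = U * (D * ((star U : Matrix n n 𝕜) * U) * D) * (star U : Matrix n n 𝕜) := by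
        simp only [Matrix.PosSemidef.sqrt, U, D, Matrix.mul_assoc]
    _ = _ := by
      rw [hU, Matrix.mul_one, diagonal_mul_diagonal]
      congr 3
      funext i
      simp [← RCLike.ofReal_mul, Real.mul_self_sqrt (hA.eigenvalues_nonneg i)]

lemma posSemidef_sqrt (hA : A.PosSemidef) : hA.sqrt.PosSemidef := by
  have hD : (diagonal ((↑) ∘ (√·) ∘ hA.1.eigenvalues) : Matrix n n 𝕜).PosSemidef :=
    posSemidef_diagonal_iff.mpr fun i => by simp [Real.sqrt_nonneg]
  simpa only [Matrix.PosSemidef.sqrt, Matrix.star_eq_conjTranspose, conjTranspose_conjTranspose]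
    using hD.conjTranspose_mul_mul_same (star hA.1.eigenvectorUnitary : Matrix n n 𝕜)

lemma trace_mul_nonneg {B : Matrix n n 𝕜} (hA : A.PosSemidef) (hB : B.PosSemidef) :
    0 ≤ (A * B).trace := by
  have hsplit : (A * B).trace = (hA.sqrtᴴ * B * hA.sqrt).trace := by
    rw [hA.posSemidef_sqrt.1.eq]
    conv_lhs => rw [← hA.sqrt_mul_self]
    rw [Matrix.mul_assoc, Matrix.trace_mul_comm, Matrix.mul_assoc]
  exact hsplit ▸ (hB.conjTranspose_mul_mul_same hA.sqrt).trace_nonneg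

end Matrix.PosSemidef

lemma Matrix.IsHermitian.two_mul_trace_le_trace_mul_inv_mul_add_trace {n : Type*} [Fintype n]
    [DecidableEq n] {R X : Matrix n n ℝ} (hR : R.IsHermitian) (hX : X.PosDef) :
    2 * R.trace ≤ (R * X⁻¹ * R).trace + X.trace := by
  have hXdet : IsUnit X.det := (isUnit_iff_isUnit_det X).mp hX.isUnit
  have hsq : (R - X)ᴴ * X⁻¹ * (R - X) = R * X⁻¹ * R - R - R + X := by
    rw [conjTranspose_sub, hR.eq, hX.1.eq]
    simp only [Matrix.sub_mul, Matrix.mul_sub, Matrix.mul_assoc, nonsing_inv_mul X hXdet,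
      Matrix.mul_one]
    rw [← Matrix.mul_assoc X, mul_nonsing_inv X hXdet, Matrix.one_mul]
    abel
  have := (hX.inv.posSemidef.conjTranspose_mul_mul_same (R - X)).trace_nonneg
  rw [hsq, trace_add, trace_sub, trace_sub] at this
  linarith

lemma Matrix.mul_inv_mul_self_add_smul_one {n K : Type*} [Fintype n] [DecidableEq n] [CommRing K]
    {B : Matrix n n K} {δ : K} (h : IsUnit (B * B + δ • 1)) :
    B * (B * B + δ • 1)⁻¹ * B = 1 - δ • (B * B + δ • 1)⁻¹ := by
  set X := B * B + δ • 1
  obtain ⟨u, hu⟩ := h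
  have hBX : Commute B X :=
    ((Commute.refl B).mul_right (Commute.refl B)).add_right ((Commute.one_right B).smul_right δ)
  have hBXinv : Commute B X⁻¹ := by
    rw [← hu, ← coe_units_inv]
    exact (hu ▸ hBX).units_inv_right
  have hXinv : X⁻¹ * X = 1 := nonsing_inv_mul X ((isUnit_iff_isUnit_det X).mp ⟨u, hu⟩)
  calc B * X⁻¹ * B = X⁻¹ * (X - δ • 1) := by
        rw [hBXinv.eq, Matrix.mul_assoc, add_sub_cancel_right]
    _ = 1 - δ • X⁻¹ := by rw [Matrix.mul_sub, hXinv, Matrix.mul_smul, Matrix.mul_one]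

/-- For positive semidefinite `S₁, S₂`,
`tr S₁ + tr S₂ ≥ 2 tr((S₂^{1/2} S₁ S₂^{1/2})^{1/2})`. -/
theorem stmt_9 {d : ℕ} (S₁ S₂ : Matrix (Fin d) (Fin d) ℝ)
    (hS₁ : S₁.PosSemidef) (hS₂ : S₂.PosSemidef)
    (hC : (hS₂.sqrt * S₁ * hS₂.sqrt).PosSemidef) :
    2 * Matrix.trace hC.sqrt ≤ Matrix.trace S₁ + Matrix.trace S₂ := by
  set B := hS₂.sqrt
  set R := hC.sqrt
  have hB : B * B = S₂ := hS₂.sqrt_mul_self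
  have hR : R * R = B * S₁ * B := hC.sqrt_mul_self
  have key : ∀ δ : ℝ, 0 < δ → 2 * R.trace ≤ S₁.trace + S₂.trace + δ * d := by
    intro δ hδ
    set X := S₂ + δ • (1 : Matrix (Fin d) (Fin d) ℝ)
    have hX : X.PosDef := PosDef.posSemidef_add hS₂ (PosDef.one.smul hδ)
    have hXB : X = B * B + δ • 1 := by rw [hB]
    have hS₁Xinv := mul_nonneg hδ.le (hS₁.trace_mul_nonneg hX.inv.posSemidef)
    calc 2 * R.trace ≤ (R * X⁻¹ * R).trace + X.trace :=
          hC.posSemidef_sqrt.1.two_mul_trace_le_trace_mul_inv_mul_add_trace hX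
      _ = (S₁ * (B * X⁻¹ * B)).trace + X.trace := by
        rw [trace_mul_comm, ← Matrix.mul_assoc, hR]
        simp only [Matrix.mul_assoc]
        rw [trace_mul_comm B]
        simp only [Matrix.mul_assoc]
      _ = S₁.trace - δ * (S₁ * X⁻¹).trace + (S₂.trace + δ * d) := by
        rw [hXB, mul_inv_mul_self_add_smul_one (hXB ▸ hX.isUnit), ← hXB]
        simp [X, Matrix.mul_sub, trace_sub, trace_add, trace_smul]
      _ ≤ S₁.trace + S₂.trace + δ * d := by linarith
  refine le_of_forall_pos_le_add fun ε hε => ?_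
  have hεd : ε / (d + 1) * d ≤ ε := by
    rw [div_mul_eq_mul_div, div_le_iff₀ (by positivity)]
    nlinarith
  linarith [key (ε / (d + 1)) (by positivity)]
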